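/- arXiv:2503.19343 — 3 statements merged into one kernel-verified Lean document; each statement's English description precedes it below -/
import Mathlib

section
/- Let f, g : ℝ → ℝ be continuously differentiable, 2π-periodic, and linearly independent as elements of the space of functions. Then there exist real numbers λ, μ, not both zero, and a point x ∈ ℝ, such that the derivative of λf + μg vanishes both at x and at x + π. -/
/-!
The Wronskian-type function `D x = f' x * g' (x + π) - g' x * f' (x + π)` is continuous and,
by 2π-periodicity, satisfies `D (x + π) = -D x`; so it vanishes somewhere. At such a point the
2×2 system `λ f' + μ g' = 0` at `x` and at `x + π` is singular and has a nonzero solution.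
-/

open Real

theorem Function.Periodic.deriv {f : ℝ → ℝ} {c : ℝ} (hf : Function.Periodic f c) :
    Function.Periodic (deriv f) c := fun x => by
  rw [← deriv_comp_add_const, show (fun t => f (t + c)) = f from funext hf]

theorem Function.Periodic.antiperiodic_mul_sub_mul {F G : ℝ → ℝ} {T : ℝ}
    (hF : Function.Periodic F (2 * T)) (hG : Function.Periodic G (2 * T)) :
    Function.Antiperiodic (fun x => F x * G (x + T) - G x * F (x + T)) T := fun x => by
  simp only [add_assoc, ← two_mul, hF x, hG x]
  ring

theorem Function.Antiperiodic.exists_eq_zero {D : ℝ → ℝ} {T : ℝ} (hD : Continuous D)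
    (h : Function.Antiperiodic D T) : ∃ x, D x = 0 := by
  have h0 : (0 : ℝ) ∈ Set.uIcc (D 0) (D T) := by
    rw [show D T = -D 0 by simpa using h 0, Set.mem_uIcc]
    rcases le_total (D 0) 0 with hle | hge
    · exact Or.inl ⟨hle, by linarith⟩
    · exact Or.inr ⟨by linarith, hge⟩
  obtain ⟨x, -, hx⟩ := intermediate_value_uIcc hD.continuousOn h0
  exact ⟨x, hx⟩

theorem exists_ne_zero_mul_add_mul_eq_zero {K : Type*} [Field K] {a b c d : K}
    (h : a * d - b * c = 0) :
    ∃ lam mu : K, ¬(lam = 0 ∧ mu = 0) ∧ lam * a + mu * b = 0 ∧ lam * c + mu * d = 0 := by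
  obtain ⟨v, hv, hMv⟩ := Matrix.exists_mulVec_eq_zero_iff.mpr
    (by rwa [Matrix.det_fin_two_of] : (!![a, b; c, d]).det = 0)
  refine ⟨v 0, v 1, fun h0 => hv (funext (Fin.forall_fin_two.mpr h0)), ?_, ?_⟩
  · simpa [Matrix.mulVec, dotProduct, Fin.sum_univ_two, mul_comm] using congrFun hMv 0
  · simpa [Matrix.mulVec, dotProduct, Fin.sum_univ_two, mul_comm] using congrFun hMv 1

theorem deriv_const_mul_add_const_mul {f g : ℝ → ℝ} {x : ℝ} (hf : DifferentiableAt ℝ f x)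
    (hg : DifferentiableAt ℝ g x) (lam mu : ℝ) :
    deriv (fun t => lam * f t + mu * g t) x = lam * deriv f x + mu * deriv g x :=
  ((hf.hasDerivAt.const_mul lam).add (hg.hasDerivAt.const_mul mu)).deriv

theorem stmt_1_general (f g : ℝ → ℝ)
    (hf : ContDiff ℝ 1 f) (hg : ContDiff ℝ 1 g)
    (hpf : Function.Periodic f (2 * π)) (hpg : Function.Periodic g (2 * π)) :
    ∃ lam mu : ℝ, ¬(lam = 0 ∧ mu = 0) ∧
      ∃ x : ℝ, deriv (fun t => lam * f t + mu * g t) x = 0 ∧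
        deriv (fun t => lam * f t + mu * g t) (x + π) = 0 := by
  have hf' : Continuous (deriv f) := hf.continuous_deriv le_rfl
  have hg' : Continuous (deriv g) := hg.continuous_deriv le_rfl
  obtain ⟨x, hx⟩ := (hpf.deriv.antiperiodic_mul_sub_mul hpg.deriv).exists_eq_zero (by fun_prop)
  obtain ⟨lam, mu, hne, h₀, hπ⟩ := exists_ne_zero_mul_add_mul_eq_zero hx
  have hfd := hf.differentiable one_ne_zero
  have hgd := hg.differentiable one_ne_zero
  refine ⟨lam, mu, hne, x, ?_, ?_⟩
  · rwa [deriv_const_mul_add_const_mul (hfd x) (hgd x)]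
  · rwa [deriv_const_mul_add_const_mul (hfd _) (hgd _)]

theorem stmt_1 (f g : ℝ → ℝ)
    (hf : ContDiff ℝ 1 f) (hg : ContDiff ℝ 1 g)
    (hpf : Function.Periodic f (2 * π)) (hpg : Function.Periodic g (2 * π))
    (hli : LinearIndependent ℝ ![f, g]) :
    ∃ lam mu : ℝ, ¬(lam = 0 ∧ mu = 0) ∧
      ∃ x : ℝ, deriv (fun t => lam * f t + mu * g t) x = 0 ∧
        deriv (fun t => lam * f t + mu * g t) (x + π) = 0 :=
  stmt_1_general f g hf hg hpf hpg
end

section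
/- Let P = (p₁₂, p₁₃, p₁₄, p₂₃, p₂₄, p₃₄) and Q = (q₁₂, q₁₃, q₁₄, q₂₃, q₂₄, q₃₄) be points of ℝ⁶ both satisfying the equations x₁₃ = 0, x₁₄² + x₂₃x₃₄ = 0, x₁₂x₃₄ + x₁₄x₂₃ = 0, x₂₃² − x₁₄x₁₂ = 0. If p₁₂ = q₁₂, p₂₄ = q₂₄, and p₃₄ = q₃₄, then P = Q. -/
/-!
On the cone, `x₁₄ ^ 3 = x₁₂ * x₃₄ ^ 2`, and cube roots are unique in `ℝ`, so `x₁₄` is fixed by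
`(x₁₂, x₃₄)`. Then `x₂₃` is fixed as well: by `x₁₄ ^ 2 + x₂₃ * x₃₄ = 0` when `x₃₄ ≠ 0`, and when
`x₃₄ = 0` the cube relation forces `x₁₄ = 0`, whence `x₂₃ ^ 2 = x₁₄ * x₁₂ = 0`.
-/

section Cone

variable {R : Type*} [CommRing R]

theorem cone_cube_eq {x12 x14 x23 x34 : R}
    (h2 : x14 ^ 2 + x23 * x34 = 0) (h3 : x12 * x34 + x14 * x23 = 0) :
    x14 ^ 3 = x12 * x34 ^ 2 := by
  linear_combination x14 * h2 - x34 * h3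

theorem cone_x14_unique [LinearOrder R] [IsStrictOrderedRing R] {x12 x34 y14 y23 z14 z23 : R}
    (hy2 : y14 ^ 2 + y23 * x34 = 0) (hy3 : x12 * x34 + y14 * y23 = 0)
    (hz2 : z14 ^ 2 + z23 * x34 = 0) (hz3 : x12 * x34 + z14 * z23 = 0) :
    y14 = z14 :=
  (by decide : Odd 3).pow_injective <| (cone_cube_eq hy2 hy3).trans (cone_cube_eq hz2 hz3).symm

theorem cone_x23_unique [IsDomain R] {x12 x14 x34 y23 z23 : R}
    (hy2 : x14 ^ 2 + y23 * x34 = 0) (hy3 : x12 * x34 + x14 * y23 = 0)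
    (hy4 : y23 ^ 2 - x14 * x12 = 0)
    (hz2 : x14 ^ 2 + z23 * x34 = 0) (hz4 : z23 ^ 2 - x14 * x12 = 0) :
    y23 = z23 := by
  rcases eq_or_ne x34 0 with rfl | h34
  · have hx14 : x14 = 0 := pow_eq_zero_iff three_ne_zero |>.mp <| by
      simpa using cone_cube_eq hy2 hy3
    subst hx14
    have hy : y23 = 0 := pow_eq_zero_iff two_ne_zero |>.mp <| by simpa using hy4
    have hz : z23 = 0 := pow_eq_zero_iff two_ne_zero |>.mp <| by simpa using hz4
    rw [hy, hz]
  · exact mul_right_cancel₀ h34 <| by linear_combination hy2 - hz2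

end Cone

theorem stmt_8 (p12 p13 p14 p23 p24 p34 q12 q13 q14 q23 q24 q34 : ℝ)
    (hp1 : p13 = 0) (hp2 : p14 ^ 2 + p23 * p34 = 0)
    (hp3 : p12 * p34 + p14 * p23 = 0) (hp4 : p23 ^ 2 - p14 * p12 = 0)
    (hq1 : q13 = 0) (hq2 : q14 ^ 2 + q23 * q34 = 0)
    (hq3 : q12 * q34 + q14 * q23 = 0) (hq4 : q23 ^ 2 - q14 * q12 = 0)
    (e12 : p12 = q12) (e24 : p24 = q24) (e34 : p34 = q34) :
    p12 = q12 ∧ p13 = q13 ∧ p14 = q14 ∧ p23 = q23 ∧ p24 = q24 ∧ p34 = q34 := by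
  subst e12 e34
  have e14 : p14 = q14 := cone_x14_unique hp2 hp3 hq2 hq3
  subst e14
  exact ⟨rfl, hp1.trans hq1.symm, rfl, cone_x23_unique hp2 hp3 hp4 hq2 hq4, e24, rfl⟩
end

section
/- Let a, b, A, α, β ∈ ℝ and let f(φ) = a·cos φ + b·sin φ be not identically zero (i.e. (a,b) ≠ (0,0)). If f(A) = f(A+π), f'(A) = α·f'(A+π), and f''(A) = β·f'(A+π) + α²·f''(A+π), then α = −1 and β = 0. -/
open Real

/-
The first harmonic f = a cos + b sin is π-antiperiodic, as is its derivative, and f'' = -f.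
So f(A) = f(A + π) = -f(A) forces f(A) = 0, hence also f''(A) = f''(A + π) = 0; since (a, b) ≠ 0,
f cannot vanish together with f' at A, so f'(A) ≠ 0. The second condition then reads
f'(A) = -α f'(A), giving α = -1, and the third reads 0 = -β f'(A), giving β = 0.
-/

section FirstHarmonic

variable (a b : ℝ)

theorem hasDerivAt_cos_add_sin (x : ℝ) :
    HasDerivAt (fun φ => a * cos φ + b * sin φ) (b * cos x + -a * sin x) x :=
  (((hasDerivAt_cos x).const_mul a).add ((hasDerivAt_sin x).const_mul b)).congr_deriv (by ring)

theorem deriv_cos_add_sin :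
    deriv (fun φ => a * cos φ + b * sin φ) = fun φ => b * cos φ + -a * sin φ :=
  funext fun x => (hasDerivAt_cos_add_sin a b x).deriv

theorem deriv_deriv_cos_add_sin :
    deriv (deriv fun φ => a * cos φ + b * sin φ) = fun φ => -(a * cos φ + b * sin φ) := by
  rw [deriv_cos_add_sin, deriv_cos_add_sin]
  funext φ
  ring

theorem antiperiodic_cos_add_sin :
    Function.Antiperiodic (fun φ => a * cos φ + b * sin φ) π := fun φ => by
  simp only [cos_add_pi, sin_add_pi]
  ring

theorem eq_zero_of_cos_add_sin_eq_zero_of_deriv {x : ℝ} (h : a * cos x + b * sin x = 0)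
    (h' : b * cos x + -a * sin x = 0) : a = 0 ∧ b = 0 := by
  have pyth := sin_sq_add_cos_sq x
  constructor
  · linear_combination cos x * h - sin x * h' - a * pyth
  · linear_combination sin x * h + cos x * h' - b * pyth

end FirstHarmonic

theorem stmt_13 (a b A α β : ℝ) (hab : ¬(a = 0 ∧ b = 0)) :
    let f : ℝ → ℝ := fun φ => a * cos φ + b * sin φ
    f A = f (A + π) →
    deriv f A = α * deriv f (A + π) →
    deriv (deriv f) A = β * deriv f (A + π) + α ^ 2 * deriv (deriv f) (A + π) →
    α = -1 ∧ β = 0 := by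
  intro f h₀ h₁ h₂
  have hf : f (A + π) = -f A := antiperiodic_cos_add_sin a b A
  have hf' : deriv f (A + π) = -deriv f A := by
    rw [deriv_cos_add_sin]
    exact antiperiodic_cos_add_sin b (-a) A
  have hf'' : ∀ x, deriv (deriv f) x = -f x := fun x => congrFun (deriv_deriv_cos_add_sin a b) x
  have hfA : f A = 0 := by linarith
  have hf'A : deriv f A ≠ 0 := by
    rw [deriv_cos_add_sin]
    exact fun h' => hab (eq_zero_of_cos_add_sin_eq_zero_of_deriv a b hfA h')
  rw [hf', hf'', hf'', hf, hfA] at h₂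
  rw [hf'] at h₁
  refine ⟨?_, ?_⟩
  · exact mul_right_cancel₀ hf'A (by linarith)
  · exact (mul_eq_zero.mp (by linarith : β * deriv f A = 0)).resolve_right hf'A
end
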